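/- Anisotropic conformable Hardy inequality with power weights: let α ∈ (0,1], let Ω ⊆ (0,∞)^n be open, let m ∈ ℝ and a ∈ ℝ with a > α, and let p_1,…,p_n satisfy 1 < p_k < a + m and p_k(1−α) ≥ a − α for each k. Then for every nonnegative continuously differentiable function u with compact support in Ω: ∑_{k=1}^n ∫_Ω x_k^m·|D^α_{x_k} u(x)|^{p_k} d_α x ≥ ∑_{k=1}^n ((m + a − p_k)/p_k)^{p_k} ∫_Ω u(x)^{p_k}·x_k^{m − α p_k} d_α x. -/

import Mathlib

open Filter Topology MeasureTheory

/-- The conformable partial derivative of order `α` in the `k`-th coordinate: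
`D^α_{x_k} f (x) = x_k^{1-α} ∂f/∂x_k (x)`. -/
noncomputable def confPDeriv (α : ℝ) {n : ℕ} (f : (Fin n → ℝ) → ℝ) (k : Fin n)
    (x : Fin n → ℝ) : ℝ :=
  (x k) ^ (1 - α) * deriv (fun t : ℝ => f (Function.update x k t)) (x k)

open Set

/-! Along a line in the `k`-th coordinate direction the weight `∏ x_j^{α-1}` only contributes
`t^{α-1}`, and with `s = m + α - α p_k` both sides become those of the one-dimensional Hardy
inequality `(s/p)^p ∫₀^∞ t^{s-1} v^p ≤ ∫₀^∞ t^{s-1} |t v'|^p`, which is applied on every line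
and integrated (Fubini). That inequality comes from the integration by parts
`s ∫ t^{s-1} v^p = -p ∫ t^s v^{p-1} v'` followed by Young's inequality with the weight `c = s/p`,
which absorbs the `v^p`-term without dividing by its integral. Finally `p_k(1-α) ≥ a - α` says
exactly that `m + a - p_k ≤ s`, so the claimed constant is the smaller one. -/

theorem ContinuousOn.integrable_of_support_subset_compact {X : Type*} [TopologicalSpace X]
    [T2Space X] [MeasurableSpace X] [OpensMeasurableSpace X] {μ : Measure X}
    [IsFiniteMeasureOnCompacts μ] {f : X → ℝ} {U K : Set X} (hf : ContinuousOn f U)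
    (hU : IsOpen U) (hK : IsCompact K) (hKU : K ⊆ U) (hfK : Function.support f ⊆ K) :
    Integrable f μ := by
  have hc : HasCompactSupport f := hK.of_isClosed_subset (isClosed_tsupport f)
    (closure_minimal hfK hK.isClosed)
  exact (hf.continuous_of_tsupport_subset hU ((closure_minimal hfK hK.isClosed).trans hKU)
    ).integrable_of_hasCompactSupport hc

theorem mul_rpow_sub_one_le {p c A B : ℝ} (hp : 1 < p) (hc : 0 < c) (hA : 0 ≤ A) (hB : 0 ≤ B) :
    A * B ^ (p - 1) ≤ c ^ (1 - p) / p * A ^ p + (p - 1) / p * c * B ^ p := by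
  have hp0 : 0 < p := one_pos.trans hp
  have key := Real.geom_mean_le_arith_mean2_weighted (w₁ := 1 / p) (w₂ := (p - 1) / p)
    (p₁ := c ^ (1 - p) * A ^ p) (p₂ := c * B ^ p) (by positivity) (div_nonneg (by linarith) hp0.le)
    (by positivity) (by positivity) (by field_simp; ring)
  convert key using 1
  · rw [Real.mul_rpow (by positivity) (by positivity), Real.mul_rpow hc.le (by positivity),
      ← Real.rpow_mul hc.le, ← Real.rpow_mul hA, ← Real.rpow_mul hB,
      mul_one_div_cancel hp0.ne', Real.rpow_one, mul_div_cancel₀ _ hp0.ne',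
      mul_mul_mul_comm, ← Real.rpow_add hc]
    rw [show (1 - p) * (1 / p) + (p - 1) / p = 0 by ring, Real.rpow_zero, one_mul]
  · ring

theorem neg_rpow_mul_rpow_mul_le {p s c t x y : ℝ} (hp : 1 < p) (hc : 0 < c) (ht : 0 < t)
    (hx : 0 ≤ x) :
    -(t ^ s * (p * x ^ (p - 1) * y)) ≤
      c ^ (1 - p) * (t ^ (s - 1) * |t * y| ^ p) + (p - 1) * c * (t ^ (s - 1) * x ^ p) := by
  have hp0 : 0 < p := one_pos.trans hp
  calc -(t ^ s * (p * x ^ (p - 1) * y)) = p * t ^ (s - 1) * (-(t * y) * x ^ (p - 1)) := by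
        rw [Real.rpow_sub_one ht.ne']; field_simp
    _ ≤ p * t ^ (s - 1) * (|t * y| * x ^ (p - 1)) := by gcongr; exact neg_le_abs _
    _ ≤ p * t ^ (s - 1) * (c ^ (1 - p) / p * |t * y| ^ p + (p - 1) / p * c * x ^ p) := by
        gcongr
        exact mul_rpow_sub_one_le hp hc (abs_nonneg _) hx
    _ = _ := by field_simp

@[fun_prop]
theorem continuousOn_rpow_const_Ioi (e : ℝ) : ContinuousOn (fun t : ℝ => t ^ e) (Ioi 0) :=
  continuousOn_id.rpow_const fun _ ht => Or.inl (ne_of_gt ht)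

section HardyOneDim

variable {v : ℝ → ℝ}

theorem integrableOn_Ioi_of_eq_zero_off_tsupport (hc : HasCompactSupport v)
    (hpos : tsupport v ⊆ Ioi 0) {f : ℝ → ℝ} (hf : ContinuousOn f (Ioi 0))
    (hfv : ∀ t ∉ tsupport v, f t = 0) : IntegrableOn f (Ioi 0) :=
  (hf.integrable_of_support_subset_compact isOpen_Ioi hc hpos
    (Function.support_subset_iff'.2 hfv)).integrableOn

theorem integral_Ioi_rpow_mul_deriv_rpow {p s : ℝ} (hp : 1 ≤ p) (hv : ContDiff ℝ 1 v)
    (hc : HasCompactSupport v) (hpos : tsupport v ⊆ Ioi 0) :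
    ∫ t in Ioi 0, t ^ s * (p * v t ^ (p - 1) * deriv v t) =
      -(s * ∫ t in Ioi 0, t ^ (s - 1) * v t ^ p) := by
  have hp0 : p ≠ 0 := (zero_lt_one.trans_le hp).ne'
  have hv' : Continuous (deriv v) := hv.continuous_deriv le_rfl
  have hvc : Continuous v := hv.continuous
  have hw : HasCompactSupport ((fun t : ℝ => t ^ s) * fun t => v t ^ p) :=
    HasCompactSupport.mul_left (hc.comp_left (g := fun x : ℝ => x ^ p) (Real.zero_rpow hp0))
  have hw0 : ((fun t : ℝ => t ^ s) * fun t => v t ^ p) =ᶠ[𝓝 0] 0 := by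
    filter_upwards [notMem_tsupport_iff_eventuallyEq.mp fun h => lt_irrefl (0 : ℝ) (hpos h)]
      with t ht
    simp [ht, Real.zero_rpow hp0]
  have hparts := integral_Ioi_mul_deriv_eq_deriv_mul (a := 0) (a' := 0) (b' := 0)
    (u' := fun t => s * t ^ (s - 1)) (v' := fun t => p * v t ^ (p - 1) * deriv v t)
    (fun t ht => Real.hasDerivAt_rpow_const (Or.inl (ne_of_gt ht)))
    (fun t _ => (Real.hasDerivAt_rpow_const (Or.inr hp)).comp t
      ((hv.differentiable one_ne_zero) t).hasDerivAt)
    (integrableOn_Ioi_of_eq_zero_off_tsupport hc hpos (by fun_prop (disch := linarith))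
      fun t ht => by simp [deriv_of_notMem_tsupport ht])
    (integrableOn_Ioi_of_eq_zero_off_tsupport hc hpos (by fun_prop (disch := linarith))
      fun t ht => by simp [image_eq_zero_of_notMem_tsupport ht, Real.zero_rpow hp0])
    ((tendsto_const_nhds.congr' hw0.symm).mono_left nhdsWithin_le_nhds)
    (hw.is_zero_at_infty.mono_left atTop_le_cocompact)
  rw [hparts, sub_self, zero_sub]
  simp only [Function.comp_apply, mul_assoc, integral_const_mul]

theorem hardy_inequality_Ioi {p s : ℝ} (hp : 1 < p) (hs : 0 < s) (hv : ContDiff ℝ 1 v) (hv0 : 0 ≤ v)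
    (hc : HasCompactSupport v) (hpos : tsupport v ⊆ Ioi 0) :
    (s / p) ^ p * ∫ t in Ioi 0, t ^ (s - 1) * v t ^ p ≤
      ∫ t in Ioi 0, t ^ (s - 1) * |t * deriv v t| ^ p := by
  have hp0 : 0 < p := one_pos.trans hp
  have hv' : Continuous (deriv v) := hv.continuous_deriv le_rfl
  have hvc : Continuous v := hv.continuous
  set c := s / p with hc_def
  have hc0 : 0 < c := div_pos hs hp0
  set J := ∫ t in Ioi 0, t ^ (s - 1) * v t ^ p
  set I := ∫ t in Ioi 0, t ^ (s - 1) * |t * deriv v t| ^ p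
  have hJint : IntegrableOn (fun t => t ^ (s - 1) * v t ^ p) (Ioi 0) :=
    integrableOn_Ioi_of_eq_zero_off_tsupport hc hpos (by fun_prop (disch := linarith))
      fun t ht => by simp [image_eq_zero_of_notMem_tsupport ht, Real.zero_rpow hp0.ne']
  have hIint : IntegrableOn (fun t => t ^ (s - 1) * |t * deriv v t| ^ p) (Ioi 0) :=
    integrableOn_Ioi_of_eq_zero_off_tsupport hc hpos (by fun_prop (disch := linarith))
      fun t ht => by simp [deriv_of_notMem_tsupport ht, Real.zero_rpow hp0.ne']
  have hKint : IntegrableOn (fun t => -(t ^ s * (p * v t ^ (p - 1) * deriv v t))) (Ioi 0) :=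
    integrableOn_Ioi_of_eq_zero_off_tsupport hc hpos (by fun_prop (disch := linarith))
      fun t ht => by simp [deriv_of_notMem_tsupport ht]
  have hsJ : s * J ≤ c ^ (1 - p) * I + (p - 1) * c * J := by
    rw [← neg_neg (s * J), ← integral_Ioi_rpow_mul_deriv_rpow hp.le hv hc hpos, ← integral_neg,
      ← integral_const_mul, ← integral_const_mul, ← integral_add (hIint.const_mul _)
        (hJint.const_mul _)]
    exact setIntegral_mono_on hKint ((hIint.const_mul _).add (hJint.const_mul _))
      measurableSet_Ioi fun t ht => neg_rpow_mul_rpow_mul_le hp hc0 ht (hv0 t)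
  have hcJ : c * J ≤ c ^ (1 - p) * I := by
    have : (p - 1) * c * J = s * J - c * J := by rw [hc_def]; field_simp
    linarith
  calc c ^ p * J = c ^ (p - 1) * (c * J) := by
        rw [← mul_assoc, ← Real.rpow_add_one hc0.ne', sub_add_cancel]
    _ ≤ c ^ (p - 1) * (c ^ (1 - p) * I) := by gcongr
    _ = I := by
        rw [← mul_assoc, ← Real.rpow_add hc0, sub_add_sub_cancel', sub_self, Real.rpow_zero,
          one_mul]

theorem conformable_hardy_inequality_real {α m p : ℝ} (hp : 1 < p) (hs : 0 < m + α - α * p)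
    (hv : ContDiff ℝ 1 v) (hv0 : 0 ≤ v) (hc : HasCompactSupport v) (hpos : tsupport v ⊆ Ioi 0) :
    ((m + α - α * p) / p) ^ p * ∫ t, v t ^ p * t ^ (m - α * p) * t ^ (α - 1) ≤
      ∫ t, t ^ m * |t ^ (1 - α) * deriv v t| ^ p * t ^ (α - 1) := by
  have hp0 : p ≠ 0 := (one_pos.trans hp).ne'
  have hIoi : ∀ {f g : ℝ → ℝ}, (∀ t ∉ tsupport v, f t = 0) → EqOn f g (Ioi 0) →
      ∫ t, f t = ∫ t in Ioi 0, g t := fun hf hfg => by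
    rw [← setIntegral_eq_integral_of_forall_compl_eq_zero fun t ht => hf t fun h => ht (hpos h)]
    exact setIntegral_congr_fun measurableSet_Ioi hfg
  rw [hIoi (g := fun t => t ^ (m + α - α * p - 1) * v t ^ p)
      (fun t ht => by simp [image_eq_zero_of_notMem_tsupport ht, Real.zero_rpow hp0])
      fun t (ht : 0 < t) => by
        simp only
        rw [show m + α - α * p - 1 = m - α * p + (α - 1) by ring, Real.rpow_add ht]
        ring,
    hIoi (g := fun t => t ^ (m + α - α * p - 1) * |t * deriv v t| ^ p)
      (fun t ht => by simp [deriv_of_notMem_tsupport ht, Real.zero_rpow hp0])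
      fun t (ht : 0 < t) => by
        simp only
        rw [abs_mul, abs_mul, abs_of_pos (Real.rpow_pos_of_pos ht _), abs_of_pos ht,
          Real.mul_rpow (Real.rpow_nonneg ht.le _) (abs_nonneg _),
          Real.mul_rpow ht.le (abs_nonneg _), ← Real.rpow_mul ht.le,
          show m + α - α * p - 1 = m + (1 - α) * p + (α - 1) - p by ring,
          Real.rpow_sub ht (m + (1 - α) * p + (α - 1)), Real.rpow_add ht (m + (1 - α) * p),
          Real.rpow_add ht]
        field_simp]
  exact hardy_inequality_Ioi hp hs hv hv0 hc hpos

end HardyOneDim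

theorem ContDiffOn.contDiff_of_tsupport_subset {E F : Type*} [NormedAddCommGroup E]
    [NormedSpace ℝ E] [NormedAddCommGroup F] [NormedSpace ℝ F] {f : E → F} {s : Set E}
    {k : WithTop ℕ∞} (hf : ContDiffOn ℝ k f s) (hs : IsOpen s) (hsupp : tsupport f ⊆ s) :
    ContDiff ℝ k f :=
  contDiff_of_contDiffOn_union_of_isOpen hf
    (contDiffOn_const.congr fun _ hx => image_eq_zero_of_notMem_tsupport hx)
    (eq_univ_of_forall fun x => (em (x ∈ tsupport f)).imp_left (hsupp ·)) hs
    (isClosed_tsupport f).isOpen_compl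

section Conformable

variable {n : ℕ}

theorem confPDeriv_eq_fderiv (α : ℝ) {u : (Fin n → ℝ) → ℝ} (k : Fin n) {x : Fin n → ℝ}
    (hu : DifferentiableAt ℝ u x) :
    confPDeriv α u k x = x k ^ (1 - α) * fderiv ℝ u x (Pi.single k 1) := by
  rw [confPDeriv]
  exact congrArg _ (hu.hasFDerivAt.comp_hasDerivAt_of_eq (x k) (hasDerivAt_update x k (x k))
    (Function.update_eq_self k x).symm).deriv

theorem confPDeriv_eq_zero_of_notMem_tsupport (α : ℝ) {u : (Fin n → ℝ) → ℝ} (k : Fin n)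
    {x : Fin n → ℝ} (hu : DifferentiableAt ℝ u x) (hx : x ∉ tsupport u) :
    confPDeriv α u k x = 0 := by
  simp [confPDeriv_eq_fderiv α k hu, fderiv_of_notMem_tsupport ℝ hx]

theorem confPDeriv_insertNth (α : ℝ) (u : (Fin (n + 1) → ℝ) → ℝ) (k : Fin (n + 1)) (t : ℝ)
    (y : Fin n → ℝ) :
    confPDeriv α u k (Fin.insertNth k t y) =
      t ^ (1 - α) * deriv (fun r => u (Fin.insertNth k r y)) t := by
  simp [confPDeriv, Fin.update_insertNth]

theorem contDiff_insertNth (k : Fin (n + 1)) (y : Fin n → ℝ) :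
    ContDiff ℝ 1 fun t : ℝ => (Fin.insertNth k t y : Fin (n + 1) → ℝ) := by
  convert contDiff_update (𝕜 := ℝ) 1 (Fin.insertNth k 0 y : Fin (n + 1) → ℝ) k using 1
  ext t : 1
  rw [Fin.update_insertNth]

theorem integral_mono_of_integral_insertNth_le (k : Fin (n + 1))
    {f g : (Fin (n + 1) → ℝ) → ℝ} (hf : Integrable f) (hg : Integrable g)
    (hfg : ∀ y, ∫ t, f (Fin.insertNth k t y) ≤ ∫ t, g (Fin.insertNth k t y)) :
    ∫ x, f x ≤ ∫ x, g x := by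
  have he := (volume_preserving_piFinSuccAbove (fun _ => ℝ) k).symm
  rw [Measure.volume_eq_prod] at he
  have hslice : ∀ {h : (Fin (n + 1) → ℝ) → ℝ}, Integrable h →
      ∫ x, h x = ∫ y, ∫ t, h (Fin.insertNth k t y) ∧
        Integrable fun y => ∫ t, h (Fin.insertNth k t y) := fun {h} hh => by
    have hprod := (he.integrable_comp_emb (MeasurableEquiv.measurableEmbedding _)).2 hh
    exact ⟨(he.integral_comp' h).symm.trans (integral_prod_symm _ hprod),
      hprod.integral_prod_right⟩
  rw [(hslice hf).1, (hslice hg).1]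
  exact integral_mono (hslice hf).2 (hslice hg).2 hfg

theorem conformable_hardy_inequality_line (k : Fin (n + 1)) {α m p : ℝ} (hp : 1 < p)
    (hs : 0 < m + α - α * p) {u : (Fin (n + 1) → ℝ) → ℝ} (hu : ContDiff ℝ 1 u) (hu0 : 0 ≤ u)
    (hc : HasCompactSupport u) (hpos : tsupport u ⊆ {x | ∀ j, 0 < x j}) {y : Fin n → ℝ}
    (hy : ∀ j, 0 < y j) :
    ((m + α - α * p) / p) ^ p * ∫ t, u (Fin.insertNth k t y) ^ p *
        (Fin.insertNth k t y : Fin (n + 1) → ℝ) k ^ (m - α * p) *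
        ∏ j, (Fin.insertNth k t y : Fin (n + 1) → ℝ) j ^ (α - 1) ≤
      ∫ t, (Fin.insertNth k t y : Fin (n + 1) → ℝ) k ^ m *
        |confPDeriv α u k (Fin.insertNth k t y)| ^ p *
        ∏ j, (Fin.insertNth k t y : Fin (n + 1) → ℝ) j ^ (α - 1) := by
  have hline := contDiff_insertNth k y
  have hsupp : tsupport (fun t => u (Fin.insertNth k t y)) ⊆ (fun x => x k) '' tsupport u :=
    fun t ht => ⟨_, tsupport_comp_subset_preimage u hline.continuous ht,
      Fin.insertNth_apply_same _ _ _⟩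
  have hW : 0 ≤ ∏ j, y j ^ (α - 1) :=
    Finset.prod_nonneg fun j _ => (Real.rpow_pos_of_pos (hy j) _).le
  have key := conformable_hardy_inequality_real hp hs (hu.comp hline) (fun t => hu0 _)
    ((hc.image (continuous_apply k)).of_isClosed_subset (isClosed_tsupport _) hsupp)
    (hsupp.trans (by rintro _ ⟨x, hx, rfl⟩; exact hpos hx k))
  simp only [confPDeriv_insertNth, Fin.insertNth_apply_same, Fin.prod_univ_succAbove _ k,
    Fin.insertNth_apply_succAbove, ← mul_assoc, integral_mul_const]
  exact mul_le_mul_of_nonneg_right key hW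

theorem conformable_hardy_inequality_coord (k : Fin (n + 1)) {α m p : ℝ} (hp : 1 < p)
    (hs : 0 < m + α - α * p) {u : (Fin (n + 1) → ℝ) → ℝ} (hu : ContDiff ℝ 1 u) (hu0 : 0 ≤ u)
    (hc : HasCompactSupport u) (hpos : tsupport u ⊆ {x | ∀ j, 0 < x j})
    {Ω : Set (Fin (n + 1) → ℝ)} (hΩu : tsupport u ⊆ Ω) :
    ((m + α - α * p) / p) ^ p * ∫ x in Ω, u x ^ p * x k ^ (m - α * p) * ∏ j, x j ^ (α - 1) ≤
      ∫ x in Ω, x k ^ m * |confPDeriv α u k x| ^ p * ∏ j, x j ^ (α - 1) := by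
  have hp0 : p ≠ 0 := (one_pos.trans hp).ne'
  have hu1 : Differentiable ℝ u := hu.differentiable one_ne_zero
  set G := fun x : Fin (n + 1) → ℝ => u x ^ p * x k ^ (m - α * p) * ∏ j, x j ^ (α - 1)
  set F := fun x : Fin (n + 1) → ℝ => x k ^ m * |confPDeriv α u k x| ^ p * ∏ j, x j ^ (α - 1)
  have hG0 : ∀ x ∉ tsupport u, G x = 0 := fun x hx => by
    simp [G, image_eq_zero_of_notMem_tsupport hx, Real.zero_rpow hp0]
  have hF0 : ∀ x ∉ tsupport u, F x = 0 := fun x hx => by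
    simp [F, confPDeriv_eq_zero_of_notMem_tsupport α k (hu1 x) hx, Real.zero_rpow hp0]
  have hU : IsOpen {x : Fin (n + 1) → ℝ | ∀ j, 0 < x j} := by
    simpa only [ofPred_forall] using
      isOpen_iInter_of_finite fun j => isOpen_lt continuous_const (continuous_apply j)
  have huc : Continuous u := hu.continuous
  have hu'c : Continuous (fderiv ℝ u) := hu.continuous_fderiv one_ne_zero
  have hcoord : ∀ j (e : ℝ),
      ContinuousOn (fun x : Fin (n + 1) → ℝ => x j ^ e) {x | ∀ j, 0 < x j} :=
    fun j e => (continuous_apply j).continuousOn.rpow_const fun x hx => Or.inl (hx j).ne'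
  have hGint : Integrable G := ContinuousOn.integrable_of_support_subset_compact
    (by simp only [G]; fun_prop (disch := linarith))
    hU hc hpos (Function.support_subset_iff'.2 hG0)
  have hFint : Integrable F := ContinuousOn.integrable_of_support_subset_compact
    (by simp only [F, confPDeriv_eq_fderiv α k (hu1 _)]; fun_prop (disch := linarith))
    hU hc hpos (Function.support_subset_iff'.2 hF0)
  rw [setIntegral_eq_integral_of_forall_compl_eq_zero fun x hx => hG0 x fun h => hx (hΩu h),
    setIntegral_eq_integral_of_forall_compl_eq_zero fun x hx => hF0 x fun h => hx (hΩu h),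
    ← integral_const_mul]
  refine integral_mono_of_integral_insertNth_le k (hGint.const_mul _) hFint fun y => ?_
  rw [integral_const_mul]
  by_cases hy : ∀ j, 0 < y j
  · exact conformable_hardy_inequality_line k hp hs hu hu0 hc hpos hy
  · push Not at hy
    obtain ⟨j, hj⟩ := hy
    have hout : ∀ t, (Fin.insertNth k t y : Fin (n + 1) → ℝ) ∉ tsupport u := fun t ht =>
      (hpos ht (k.succAbove j)).not_ge (by simpa using hj)
    simp [hF0 _ (hout _), hG0 _ (hout _)]

end Conformable

theorem anisotropic_conformable_hardy_power_weight_general (α : ℝ)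
    (n : ℕ) (Ω : Set (Fin n → ℝ)) (hΩ : IsOpen Ω)
    (hΩpos : Ω ⊆ {x : Fin n → ℝ | ∀ k, 0 < x k})
    (m a : ℝ)
    (p : Fin n → ℝ) (hp1 : ∀ k, 1 < p k) (hp2 : ∀ k, p k < a + m)
    (hp3 : ∀ k, p k * (1 - α) ≥ a - α)
    (u : (Fin n → ℝ) → ℝ) (hu : ContDiffOn ℝ 1 u Ω) (hu0 : ∀ x ∈ Ω, 0 ≤ u x)
    (husupp : HasCompactSupport u) (husubset : tsupport u ⊆ Ω) :
    ∑ k, ∫ x in Ω, (x k) ^ m * |confPDeriv α u k x| ^ (p k) * ∏ j, (x j) ^ (α - 1)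
      ≥ ∑ k, ((m + a - p k) / p k) ^ (p k)
          * ∫ x in Ω, u x ^ (p k) * (x k) ^ (m - α * p k) * ∏ j, (x j) ^ (α - 1) := by
  rcases n with _ | n
  · simp
  have hu' : ContDiff ℝ 1 u := hu.contDiff_of_tsupport_subset hΩ husubset
  have hu0' : 0 ≤ u := fun x => by
    by_cases hx : x ∈ Ω
    · exact hu0 x hx
    · simp [image_eq_zero_of_notMem_tsupport fun h => hx (husubset h)]
  refine Finset.sum_le_sum fun k _ => ?_
  have hp0 : 0 < p k := one_pos.trans (hp1 k)
  have hma : 0 < m + a - p k := by linarith [hp2 k]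
  have hs : m + a - p k ≤ m + α - α * p k := by nlinarith [hp3 k]
  have hG : 0 ≤ ∫ x in Ω, u x ^ p k * x k ^ (m - α * p k) * ∏ j, x j ^ (α - 1) :=
    setIntegral_nonneg hΩ.measurableSet fun x hx =>
      have hx' : ∀ j, 0 < x j := hΩpos hx
      mul_nonneg (mul_nonneg (Real.rpow_nonneg (hu0 x hx) _) (Real.rpow_nonneg (hx' k).le _))
        (Finset.prod_nonneg fun j _ => Real.rpow_nonneg (hx' j).le _)
  calc ((m + a - p k) / p k) ^ p k *
          ∫ x in Ω, u x ^ p k * x k ^ (m - α * p k) * ∏ j, x j ^ (α - 1)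
      ≤ ((m + α - α * p k) / p k) ^ p k *
          ∫ x in Ω, u x ^ p k * x k ^ (m - α * p k) * ∏ j, x j ^ (α - 1) := by
        gcongr
    _ ≤ _ := conformable_hardy_inequality_coord k (hp1 k) (hma.trans_le hs) hu' hu0' husupp
        (husubset.trans hΩpos) husubset

/-- Anisotropic conformable Hardy inequality with power weights:
`∑ₖ ∫_Ω x_k^m |D^α_{x_k} u|^{p_k} d_α x
  ≥ ∑ₖ ((m+a-p_k)/p_k)^{p_k} ∫_Ω u^{p_k} x_k^{m-αp_k} d_α x`. -/
theorem anisotropic_conformable_hardy_power_weight (α : ℝ)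
    (hα : α ∈ Set.Ioc (0 : ℝ) 1)
    (n : ℕ) (Ω : Set (Fin n → ℝ)) (hΩ : IsOpen Ω)
    (hΩpos : Ω ⊆ {x : Fin n → ℝ | ∀ k, 0 < x k})
    (m a : ℝ) (ha : α < a)
    (p : Fin n → ℝ) (hp1 : ∀ k, 1 < p k) (hp2 : ∀ k, p k < a + m)
    (hp3 : ∀ k, p k * (1 - α) ≥ a - α)
    (u : (Fin n → ℝ) → ℝ) (hu : ContDiffOn ℝ 1 u Ω) (hu0 : ∀ x ∈ Ω, 0 ≤ u x)
    (husupp : HasCompactSupport u) (husubset : tsupport u ⊆ Ω) :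
    ∑ k, ∫ x in Ω, (x k) ^ m * |confPDeriv α u k x| ^ (p k) * ∏ j, (x j) ^ (α - 1)
      ≥ ∑ k, ((m + a - p k) / p k) ^ (p k)
          * ∫ x in Ω, u x ^ (p k) * (x k) ^ (m - α * p k) * ∏ j, (x j) ^ (α - 1) :=
  anisotropic_conformable_hardy_power_weight_general α n Ω hΩ hΩpos m a p hp1 hp2 hp3 u hu hu0
    husupp husubset
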